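/- arXiv:math/9903146 — 2 statements merged into one kernel-verified Lean document; each statement's English description precedes it below -/
import Mathlib

section
/- Let (V,Q) be a quadratic space over ℚ, C⁺(Q) its even Clifford algebra, ι the canonical anti-involution, α ∈ C⁺(Q) with ι(α) = -α, and J ∈ C⁺(Q)_ℝ with ι(J) = -J. Define E(x,y) = Tr(α ι(x) y) and h_s(a+bi)x = x·(a-bJ) (right multiplication) for a² + b² ≠ 0. Then: (1) E(h_s(z)x, h_s(z)y) = (z z̄) E(x,y) for all z ∈ ℂ*, and (2) the form (x,y) ↦ E(x, h_s(i)y) = -Tr(α ι(x) J y) is symmetric, provided J² = -1. -/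
/-!
Part (1) comes from the identity `ι(a - bJ) (a - bJ) = a² + b²`. Part (2) follows by
cyclicity of the trace once one knows `Tr(ι(c)) = Tr(c)`. For that, write `c` as a combination
of words `e_{i₁} ⋯ e_{i_k}` in distinct vectors of an orthogonal basis of a finite-dimensional
subspace of `V`; `ι` multiplies such a word by `(-1)^(k(k-1)/2)`, so it suffices that left
multiplication by a nonempty even word `e_i w` has trace zero. If `Q(e_i) = 0` the word squares
to zero; otherwise `x ↦ e_i x e_i` is invertible and anticommutes with left multiplication by
the word.
-/

open CliffordAlgebra

noncomputable section

set_option synthInstance.maxHeartbeats 400000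

variable {V : Type*} [AddCommGroup V] [Module ℝ V]

/-- The trace of left multiplication by `c` on the even Clifford algebra. -/
def Tr11 (Q : QuadraticForm ℝ V) (c : ↥(even Q)) : ℝ :=
  LinearMap.trace ℝ ↥(even Q) (LinearMap.mulLeft ℝ c)

/-- The canonical anti-involution `ι` (Mathlib's `reverse`) on the even Clifford
algebra. -/
def rev11 (Q : QuadraticForm ℝ V) (x : ↥(even Q)) : ↥(even Q) :=
  ⟨reverse (x : CliffordAlgebra Q), (reverse_mem_evenOdd_iff Q).mpr x.2⟩

/-- The Kuga–Satake form `E(x, y) = Tr(α ι(x) y)` on the even Clifford algebra. -/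
def E11 (Q : QuadraticForm ℝ V) (α x y : ↥(even Q)) : ℝ :=
  Tr11 Q (α * rev11 Q x * y)

lemma LinearMap.trace_eq_zero_of_mul_eq_neg {R M : Type*} [CommRing R] [IsAddTorsionFree R]
    [AddCommGroup M] [Module R M] {f g : Module.End R M} (hg : IsUnit g)
    (h : g * f = -(f * g)) : LinearMap.trace R M f = 0 := by
  have hconj : hg.unit * f * ↑hg.unit⁻¹ = -f := by
    rw [IsUnit.unit_spec, h, neg_mul, mul_assoc, IsUnit.mul_val_inv, mul_one]
  rw [← self_eq_neg, ← map_neg, ← hconj, LinearMap.trace_conj]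

lemma LinearMap.trace_mulLeft_eq_zero_of_isNilpotent {R A : Type*} [CommRing R] [IsReduced R]
    [Ring A] [Algebra R A] {a : A} (ha : IsNilpotent a) :
    LinearMap.trace R A (LinearMap.mulLeft R a) = 0 :=
  (LinearMap.isNilpotent_trace_of_isNilpotent
    ((LinearMap.isNilpotent_mulLeft_iff R a).mpr ha)).eq_zero

section Words

variable {R M : Type*} [CommRing R] [AddCommGroup M] [Module R M] (Q : QuadraticForm R M)
  {κ : Type*} (e : κ → M)

def wordProd (l : List κ) : CliffordAlgebra Q :=
  (l.map fun i => ι Q (e i)).prod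

@[simp] lemma wordProd_nil : wordProd Q e [] = 1 := rfl

@[simp] lemma wordProd_cons (i : κ) (l : List κ) :
    wordProd Q e (i :: l) = ι Q (e i) * wordProd Q e l := List.prod_cons

@[simp] lemma wordProd_append (l₁ l₂ : List κ) :
    wordProd Q e (l₁ ++ l₂) = wordProd Q e l₁ * wordProd Q e l₂ := by
  simp [wordProd]

lemma wordProd_mem_evenOdd (l : List κ) : wordProd Q e l ∈ evenOdd Q l.length := by
  induction l with
  | nil => exact one_le_evenOdd_zero Q (Submodule.mem_one.mpr ⟨1, map_one _⟩)
  | cons i l ih =>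
    rw [wordProd_cons, List.length_cons, Nat.cast_succ, add_comm]
    exact SetLike.mul_mem_graded (ι_mem_evenOdd_one Q (e i)) ih

def nodupWordSpan : Submodule R (CliffordAlgebra Q) :=
  Submodule.span R {x | ∃ l : List κ, l.Nodup ∧ wordProd Q e l = x}

variable {Q e} (horth : Pairwise fun i j => Q.IsOrtho (e i) (e j))
include horth

lemma wordProd_mul_ι {i : κ} {l : List κ} (hi : i ∉ l) :
    wordProd Q e l * ι Q (e i) = (-1 : R) ^ l.length • (ι Q (e i) * wordProd Q e l) := by
  induction l with
  | nil => simp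
  | cons j l ih =>
    rw [List.mem_cons, not_or] at hi
    obtain ⟨hij, hil⟩ := hi
    rw [wordProd_cons, mul_assoc, ih hil, mul_smul_comm, ← mul_assoc,
      ι_mul_ι_comm_of_isOrtho (horth (Ne.symm hij)), List.length_cons, pow_succ, mul_smul]
    simp [mul_assoc]

lemma reverse_wordProd {l : List κ} (hl : l.Nodup) :
    reverse (wordProd Q e l) = (-1 : R) ^ l.length.choose 2 • wordProd Q e l := by
  induction l with
  | nil => simp
  | cons i l ih =>
    obtain ⟨hil, hl⟩ := List.nodup_cons.mp hl
    rw [wordProd_cons, reverse.map_mul, reverse_ι, ih hl, smul_mul_assoc,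
      wordProd_mul_ι horth hil, smul_smul, ← pow_add, List.length_cons,
      Nat.choose_succ_succ', Nat.choose_one_right, add_comm]

lemma ι_mul_wordProd_mem_nodupWordSpan (i : κ) {l : List κ} (hl : l.Nodup) :
    ι Q (e i) * wordProd Q e l ∈ nodupWordSpan Q e := by
  by_cases hil : i ∈ l
  · obtain ⟨s, t, rfl⟩ := List.append_of_mem hil
    have hst : (s ++ t).Nodup :=
      hl.sublist ((List.Sublist.refl s).append (List.sublist_cons_self i t))
    have his : i ∉ s := fun h => List.disjoint_of_nodup_append hl h List.mem_cons_self
    have hcalc : ι Q (e i) * wordProd Q e (s ++ i :: t) =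
        ((-1 : R) ^ s.length * Q (e i)) • wordProd Q e (s ++ t) := by
      rw [wordProd_append, wordProd_cons, ← mul_assoc, ← mul_assoc,
        mul_assoc _ (wordProd Q e s), wordProd_mul_ι horth his, mul_smul_comm, ← mul_assoc,
        ι_sq_scalar, ← Algebra.smul_def]
      simp [mul_smul]
    rw [hcalc]
    exact Submodule.smul_mem _ _ (Submodule.subset_span ⟨s ++ t, hst, rfl⟩)
  · exact Submodule.subset_span ⟨i :: l, List.nodup_cons.mpr ⟨hil, hl⟩, rfl⟩

lemma ι_mul_mem_nodupWordSpan {m : M} (hm : m ∈ Submodule.span R (Set.range e))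
    {x : CliffordAlgebra Q} (hx : x ∈ nodupWordSpan Q e) : ι Q m * x ∈ nodupWordSpan Q e := by
  induction hm using Submodule.span_induction with
  | mem _ hm =>
    obtain ⟨i, rfl⟩ := hm
    induction hx using Submodule.span_induction with
    | mem _ hx =>
      obtain ⟨l, hl, rfl⟩ := hx
      exact ι_mul_wordProd_mem_nodupWordSpan horth i hl
    | zero => simp
    | add _ _ _ _ hx hy => rw [mul_add]; exact add_mem hx hy
    | smul r _ _ hx => rw [mul_smul_comm]; exact Submodule.smul_mem _ r hx
  | zero => simp
  | add _ _ _ _ hm hm' => rw [map_add, add_mul]; exact add_mem hm hm'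
  | smul r _ _ hm => rw [map_smul, smul_mul_assoc]; exact Submodule.smul_mem _ r hm

lemma mem_nodupWordSpan_of_mem_adjoin {x : CliffordAlgebra Q}
    (hx : x ∈ Algebra.adjoin R (ι Q '' Submodule.span R (Set.range e))) :
    x ∈ nodupWordSpan Q e := by
  have h1 : (1 : CliffordAlgebra Q) ∈ nodupWordSpan Q e :=
    Submodule.subset_span ⟨[], List.nodup_nil, rfl⟩
  suffices ∀ y ∈ nodupWordSpan Q e, x * y ∈ nodupWordSpan Q e by simpa using this 1 h1
  induction hx using Algebra.adjoin_induction with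
  | mem _ hx =>
    obtain ⟨m, hm, rfl⟩ := hx
    exact fun y hy => ι_mul_mem_nodupWordSpan horth hm hy
  | algebraMap r => exact fun y hy => by rw [← Algebra.smul_def]; exact Submodule.smul_mem _ r hy
  | add _ _ _ _ hx hx' => exact fun y hy => by rw [add_mul]; exact add_mem (hx y hy) (hx' y hy)
  | mul _ _ _ _ hx hx' => exact fun y hy => by rw [mul_assoc]; exact hx _ (hx' y hy)

end Words

lemma exists_fg_mem_adjoin {R M : Type*} [CommRing R] [AddCommGroup M] [Module R M]
    {Q : QuadraticForm R M} (x : CliffordAlgebra Q) :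
    ∃ W : Submodule R M, W.FG ∧ x ∈ Algebra.adjoin R (ι Q '' W) := by
  have mono {W W' : Submodule R M} (h : W ≤ W') :
      Algebra.adjoin R (ι Q '' W) ≤ Algebra.adjoin R (ι Q '' W') :=
    Algebra.adjoin_mono (Set.image_mono h)
  induction x using CliffordAlgebra.induction with
  | algebraMap r => exact ⟨⊥, Submodule.fg_bot, Subalgebra.algebraMap_mem _ r⟩
  | ι m => exact ⟨R ∙ m, Submodule.fg_span_singleton m,
      Algebra.subset_adjoin ⟨m, Submodule.mem_span_singleton_self m, rfl⟩⟩
  | mul _ _ hx hy =>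
    obtain ⟨W, hW, hx⟩ := hx
    obtain ⟨W', hW', hy⟩ := hy
    exact ⟨W ⊔ W', hW.sup hW', mul_mem (mono le_sup_left hx) (mono le_sup_right hy)⟩
  | add _ _ hx hy =>
    obtain ⟨W, hW, hx⟩ := hx
    obtain ⟨W', hW', hy⟩ := hy
    exact ⟨W ⊔ W', hW.sup hW', add_mem (mono le_sup_left hx) (mono le_sup_right hy)⟩

lemma exists_isOrtho_mem_nodupWordSpan {K V : Type*} [Field K] [Invertible (2 : K)]
    [AddCommGroup V] [Module K V] {Q : QuadraticForm K V} (x : CliffordAlgebra Q) :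
    ∃ (n : ℕ) (e : Fin n → V), Pairwise (fun i j => Q.IsOrtho (e i) (e j)) ∧
      x ∈ nodupWordSpan Q e := by
  obtain ⟨W, hW, hx⟩ := exists_fg_mem_adjoin x
  have : FiniteDimensional K W := Module.Finite.iff_fg.mpr hW
  obtain ⟨v, hv⟩ := LinearMap.BilinForm.exists_orthogonal_basis
    (QuadraticForm.associated_isSymm K (Q.comp W.subtype))
  have hspan : Submodule.span K (Set.range (W.subtype ∘ v)) = W := by
    rw [Set.range_comp, ← Submodule.map_span, v.span_eq, Submodule.map_subtype_top]
  have horth : Pairwise fun i j => Q.IsOrtho ((W.subtype ∘ v) i) ((W.subtype ∘ v) j) :=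
    fun i j hij => by
      simpa [QuadraticMap.isOrtho_def] using QuadraticMap.associated_isOrtho.mp (hv hij)
  rw [← hspan] at hx
  exact ⟨_, _, horth, mem_nodupWordSpan_of_mem_adjoin horth hx⟩

section EvenPart

variable {R M : Type*} [CommRing R] [AddCommGroup M] [Module R M] (Q : QuadraticForm R M)

def evenComponent : CliffordAlgebra Q →ₗ[R] even Q :=
  LinearMap.codRestrict (Subalgebra.toSubmodule (even Q)) (GradedAlgebra.proj (evenOdd Q) 0)
    fun x => by rw [even_toSubmodule]; exact SetLike.coe_mem _

lemma coe_evenComponent_of_mem_evenOdd_zero {x : CliffordAlgebra Q} (hx : x ∈ evenOdd Q 0) :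
    (evenComponent Q x : CliffordAlgebra Q) = x :=
  DirectSum.decompose_of_mem_same _ hx

lemma evenComponent_of_mem_evenOdd_one {x : CliffordAlgebra Q} (hx : x ∈ evenOdd Q 1) :
    evenComponent Q x = 0 :=
  Subtype.ext (DirectSum.decompose_of_mem_ne _ hx one_ne_zero)

lemma evenComponent_coe (x : even Q) : evenComponent Q x = x :=
  Subtype.ext (coe_evenComponent_of_mem_evenOdd_zero Q (by rw [← even_toSubmodule]; exact x.2))

lemma ι_mul_mul_ι_mem_even (m : M) (x : even Q) : ι Q m * x * ι Q m ∈ even Q := by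
  have hx : (x : CliffordAlgebra Q) ∈ evenOdd Q 0 := by rw [← even_toSubmodule]; exact x.2
  have h := SetLike.mul_mem_graded
    (SetLike.mul_mem_graded (ι_mem_evenOdd_one Q m) hx) (ι_mem_evenOdd_one Q m)
  rwa [show (1 : ZMod 2) + 0 + 1 = 0 by decide, ← even_toSubmodule] at h

def evenSandwich (m : M) : Module.End R (even Q) where
  toFun x := ⟨ι Q m * x * ι Q m, ι_mul_mul_ι_mem_even Q m x⟩
  map_add' x y := by ext; simp [mul_add, add_mul]
  map_smul' r x := by ext; simp

@[simp] lemma coe_evenSandwich (m : M) (x : even Q) :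
    (evenSandwich Q m x : CliffordAlgebra Q) = ι Q m * x * ι Q m := rfl

lemma evenSandwich_mul_self (m : M) : evenSandwich Q m * evenSandwich Q m = (Q m * Q m) • 1 := by
  ext x
  simp only [Module.End.mul_apply, coe_evenSandwich, LinearMap.smul_apply, Module.End.one_apply,
    SetLike.val_smul]
  simp only [← mul_assoc]
  rw [mul_assoc _ (ι Q m) (ι Q m), ι_sq_scalar, ← Algebra.commutes, ← mul_assoc,
    ← map_mul, ← Algebra.smul_def]

lemma isUnit_evenSandwich {m : M} (hm : IsUnit (Q m)) : IsUnit (evenSandwich Q m) := by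
  obtain ⟨u, hu⟩ := hm.mul hm
  refine ⟨⟨evenSandwich Q m, (↑u⁻¹ : R) • evenSandwich Q m, ?_, ?_⟩, rfl⟩
  · simp [evenSandwich_mul_self, ← hu, smul_smul]
  · simp [evenSandwich_mul_self, ← hu, smul_smul]

end EvenPart

section TraceReverse

variable (Q : QuadraticForm ℝ V)

lemma Tr11_add (a b : even Q) : Tr11 Q (a + b) = Tr11 Q a + Tr11 Q b :=
  map_add (LinearMap.trace ℝ (even Q) ∘ₗ LinearMap.mul ℝ (even Q)) a b

lemma Tr11_smul (r : ℝ) (a : even Q) : Tr11 Q (r • a) = r * Tr11 Q a :=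
  map_smul (LinearMap.trace ℝ (even Q) ∘ₗ LinearMap.mul ℝ (even Q)) r a

lemma Tr11_neg (a : even Q) : Tr11 Q (-a) = -Tr11 Q a :=
  map_neg (LinearMap.trace ℝ (even Q) ∘ₗ LinearMap.mul ℝ (even Q)) a

lemma Tr11_mul_comm (a b : even Q) : Tr11 Q (a * b) = Tr11 Q (b * a) := by
  simp only [Tr11, LinearMap.mulLeft_mul, ← Module.End.mul_eq_comp, LinearMap.trace_mul_comm]

@[simp] lemma coe_rev11 (x : even Q) :
    (rev11 Q x : CliffordAlgebra Q) = reverse (x : CliffordAlgebra Q) := rfl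

lemma rev11_mul (x y : even Q) : rev11 Q (x * y) = rev11 Q y * rev11 Q x := by
  ext; simp

lemma rev11_rev11 (x : even Q) : rev11 Q (rev11 Q x) = x := by
  ext; simp

lemma rev11_add (x y : even Q) : rev11 Q (x + y) = rev11 Q x + rev11 Q y := by
  ext; simp

lemma rev11_smul (r : ℝ) (x : even Q) : rev11 Q (r • x) = r • rev11 Q x := by
  ext; simp

lemma rev11_one : rev11 Q 1 = 1 := by
  ext; simp

lemma rev11_zero : rev11 Q 0 = 0 := by
  ext; simp

lemma rev11_neg (x : even Q) : rev11 Q (-x) = -rev11 Q x := by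
  ext; simp

end TraceReverse

section OrthogonalWords

variable {Q : QuadraticForm ℝ V} {n : ℕ} {e : Fin n → V}
  (horth : Pairwise fun i j => Q.IsOrtho (e i) (e j))
include horth

lemma Tr11_eq_zero_of_coe_eq_wordProd {i : Fin n} {l : List (Fin n)} (hl : (i :: l).Nodup)
    (hodd : Odd l.length) {z : even Q} (hz : (z : CliffordAlgebra Q) = wordProd Q e (i :: l)) :
    Tr11 Q z = 0 := by
  have hanti : (z : CliffordAlgebra Q) * ι Q (e i) = -(ι Q (e i) * z) := by
    rw [hz, wordProd_cons, mul_assoc, wordProd_mul_ι horth (List.nodup_cons.mp hl).1,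
      hodd.neg_one_pow, neg_one_smul, mul_neg, ← mul_assoc]
  by_cases hq : Q (e i) = 0
  · refine LinearMap.trace_mulLeft_eq_zero_of_isNilpotent ⟨2, Subtype.ext ?_⟩
    rw [pow_two, MulMemClass.coe_mul, ZeroMemClass.coe_zero]
    nth_rw 2 [hz]
    rw [wordProd_cons, ← mul_assoc, hanti, hz, wordProd_cons, ← mul_assoc, ι_sq_scalar, hq,
      map_zero, zero_mul, neg_zero, zero_mul]
  · refine LinearMap.trace_eq_zero_of_mul_eq_neg (isUnit_evenSandwich Q (Ne.isUnit hq)) ?_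
    ext x
    simp only [Module.End.mul_apply, LinearMap.mulLeft_apply, coe_evenSandwich,
      MulMemClass.coe_mul, LinearMap.neg_apply, NegMemClass.coe_neg]
    rw [← mul_assoc, ← neg_eq_iff_eq_neg.mpr hanti]
    simp only [neg_mul, mul_assoc]

lemma Tr11_rev11_evenComponent_wordProd {l : List (Fin n)} (hl : l.Nodup) :
    Tr11 Q (rev11 Q (evenComponent Q (wordProd Q e l))) =
      Tr11 Q (evenComponent Q (wordProd Q e l)) := by
  rcases Nat.even_or_odd l.length with heven | hodd
  · have hmem := wordProd_mem_evenOdd Q e l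
    rw [(ZMod.natCast_eq_zero_iff_even).mpr heven] at hmem
    set z := evenComponent Q (wordProd Q e l)
    have hz : (z : CliffordAlgebra Q) = wordProd Q e l :=
      coe_evenComponent_of_mem_evenOdd_zero Q hmem
    have hrev : rev11 Q z = (-1 : ℝ) ^ l.length.choose 2 • z := by
      ext; rw [coe_rev11, hz, reverse_wordProd horth hl, SetLike.val_smul, hz]
    rcases l with _ | ⟨i, l⟩
    · simp [hrev]
    · have htr := Tr11_eq_zero_of_coe_eq_wordProd horth hl
        (by simpa [Nat.even_add_one] using heven) hz
      rw [hrev, Tr11_smul, htr, mul_zero]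
  · have hmem := wordProd_mem_evenOdd Q e l
    rw [(ZMod.natCast_eq_one_iff_odd).mpr hodd] at hmem
    rw [evenComponent_of_mem_evenOdd_one Q hmem, rev11_zero]

lemma Tr11_rev11_evenComponent {x : CliffordAlgebra Q} (hx : x ∈ nodupWordSpan Q e) :
    Tr11 Q (rev11 Q (evenComponent Q x)) = Tr11 Q (evenComponent Q x) := by
  induction hx using Submodule.span_induction with
  | mem _ hx =>
    obtain ⟨l, hl, rfl⟩ := hx
    exact Tr11_rev11_evenComponent_wordProd horth hl
  | zero => rw [map_zero, rev11_zero]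
  | add _ _ _ _ hx hy => rw [map_add, rev11_add, Tr11_add, Tr11_add, hx, hy]
  | smul r _ _ hx => rw [map_smul, rev11_smul, Tr11_smul, Tr11_smul, hx]

end OrthogonalWords

lemma Tr11_rev11 (Q : QuadraticForm ℝ V) (c : even Q) : Tr11 Q (rev11 Q c) = Tr11 Q c := by
  obtain ⟨n, e, horth, hc⟩ := exists_isOrtho_mem_nodupWordSpan (c : CliffordAlgebra Q)
  simpa only [evenComponent_coe] using Tr11_rev11_evenComponent horth hc

section Form

variable {Q : QuadraticForm ℝ V} {α J : even Q}

lemma E11_neg_right (x y : even Q) : E11 Q α x (-y) = -E11 Q α x y := by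
  rw [E11, mul_neg, Tr11_neg, E11]

lemma E11_mul_mul {u : even Q} {r : ℝ} (hu : rev11 Q u * u = r • 1) (x y : even Q) :
    E11 Q α (u * x) (u * y) = r * E11 Q α x y := by
  rw [E11, E11, rev11_mul, ← Tr11_smul]
  congr 1
  simp only [mul_assoc]
  rw [← mul_assoc (rev11 Q u) u y, hu, smul_mul_assoc, one_mul, mul_smul_comm, mul_smul_comm]

lemma rev11_mul_self_eq_sq_add_sq (hJ : rev11 Q J = -J) (hJ2 : J * J = -1) (a b : ℝ) :
    rev11 Q (a • 1 - b • J) * (a • 1 - b • J) = (a ^ 2 + b ^ 2) • (1 : even Q) := by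
  rw [sub_eq_add_neg, rev11_add, rev11_neg, rev11_smul, rev11_smul, rev11_one, hJ, smul_neg,
    neg_neg, add_mul, mul_add, mul_add]
  simp only [smul_mul_assoc, mul_smul_comm, one_mul, mul_one, mul_neg, hJ2]
  module

lemma E11_mul_symm (hα : rev11 Q α = -α) (hJ : rev11 Q J = -J) (x y : even Q) :
    E11 Q α x (J * y) = E11 Q α y (J * x) :=
  calc Tr11 Q (α * rev11 Q x * (J * y))
      = Tr11 Q (rev11 Q (α * rev11 Q x * (J * y))) := (Tr11_rev11 Q _).symm
    _ = Tr11 Q (rev11 Q y * J * x * α) := by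
      simp only [rev11_mul, rev11_rev11, hα, hJ, mul_neg, neg_mul, neg_neg, mul_assoc]
    _ = Tr11 Q (α * rev11 Q y * (J * x)) := by
      rw [Tr11_mul_comm]
      simp only [mul_assoc]

end Form

/-- let `α, J` be elements of the (real) even Clifford algebra with
`ι(α) = -α`, `ι(J) = -J` and `J² = -1`, let `E(x,y) = Tr(α ι(x) y)` and let
`h_s(a+bi)` act by `x ↦ (a - bJ)x`.  Then
(1) `E(h_s(z)x, h_s(z)y) = (z z̄)·E(x,y)` for every `z = a+bi ∈ ℂ*`, and
(2) the form `(x,y) ↦ E(x, h_s(i)y) = -Tr(α ι(x) J y)` is symmetric. -/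
theorem stmt_11 (Q : QuadraticForm ℝ V) (α J : ↥(even Q))
    (hα : rev11 Q α = -α) (hJ : rev11 Q J = -J) (hJ2 : J * J = -1) :
    (∀ a b : ℝ, a ^ 2 + b ^ 2 ≠ 0 → ∀ x y : ↥(even Q),
      E11 Q α ((a • (1 : ↥(even Q)) - b • J) * x) ((a • (1 : ↥(even Q)) - b • J) * y) =
        (a ^ 2 + b ^ 2) * E11 Q α x y) ∧
    (∀ x y : ↥(even Q), E11 Q α x (-(J * y)) = E11 Q α y (-(J * x))) := by
  refine ⟨fun a b _ x y => E11_mul_mul (rev11_mul_self_eq_sq_add_sq hJ hJ2 a b) x y,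
    fun x y => ?_⟩
  rw [E11_neg_right, E11_neg_right, E11_mul_symm hα hJ]

end
end

section
/- For d ≡ 3 mod 4 a positive integer, the quaternion algebra (-1, d) over ℚ is a division algebra; equivalently, the equation -x² + dy² = -dz² (equivalently dx² = y² + z²) has no nontrivial rational solution. -/
open Quaternion

private lemma key_zmod : ∀ a b c : ZMod 4, 3 * a ^ 2 = b ^ 2 + c ^ 2 →
    2 * a = 0 ∧ 2 * b = 0 ∧ 2 * c = 0 := by decide

private lemma keyInt (d : ℕ) (hmod : d % 4 = 3) :
    ∀ x y z : ℤ, (d : ℤ) * x ^ 2 = y ^ 2 + z ^ 2 → x = 0 ∧ y = 0 ∧ z = 0 := by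
  have hd4 : ((d : ℕ) : ZMod 4) = 3 := by
    rw [← ZMod.natCast_mod, hmod]; rfl
  suffices H : ∀ n : ℕ, ∀ x y z : ℤ, x.natAbs ≤ n → (d : ℤ) * x ^ 2 = y ^ 2 + z ^ 2 →
      x = 0 ∧ y = 0 ∧ z = 0 by
    intro x y z h; exact H x.natAbs x y z le_rfl h
  intro n
  induction n with
  | zero =>
    intro x y z hle heq
    have hx : x = 0 := by omega
    subst hx
    have h1 : y ^ 2 = 0 ∧ z ^ 2 = 0 := by constructor <;> nlinarith [sq_nonneg y, sq_nonneg z]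
    exact ⟨rfl, pow_eq_zero_iff two_ne_zero |>.mp h1.1, pow_eq_zero_iff two_ne_zero |>.mp h1.2⟩
  | succ n ih =>
    intro x y z hle heq
    have h4 : (3 : ZMod 4) * (x : ZMod 4) ^ 2 = (y : ZMod 4) ^ 2 + (z : ZMod 4) ^ 2 := by
      have := congrArg (fun t : ℤ => (t : ZMod 4)) heq
      push_cast at this
      rw [hd4] at this
      exact this
    obtain ⟨hx4, hy4, hz4⟩ := key_zmod _ _ _ h4
    have hx2 : (2 : ℤ) ∣ x := by
      have : ((2 * x : ℤ) : ZMod 4) = 0 := by push_cast; exact hx4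
      have := (ZMod.intCast_zmod_eq_zero_iff_dvd _ 4).mp this
      omega
    have hy2 : (2 : ℤ) ∣ y := by
      have : ((2 * y : ℤ) : ZMod 4) = 0 := by push_cast; exact hy4
      have := (ZMod.intCast_zmod_eq_zero_iff_dvd _ 4).mp this
      omega
    have hz2 : (2 : ℤ) ∣ z := by
      have : ((2 * z : ℤ) : ZMod 4) = 0 := by push_cast; exact hz4
      have := (ZMod.intCast_zmod_eq_zero_iff_dvd _ 4).mp this
      omega
    obtain ⟨x', rfl⟩ := hx2
    obtain ⟨y', rfl⟩ := hy2
    obtain ⟨z', rfl⟩ := hz2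
    have heq' : (d : ℤ) * x' ^ 2 = y' ^ 2 + z' ^ 2 := by nlinarith [heq]
    have hle' : x'.natAbs ≤ n := by
      have h2 : (2 * x').natAbs = 2 * x'.natAbs := by simp [Int.natAbs_mul]
      omega
    obtain ⟨h1, h2, h3⟩ := ih x' y' z' hle' heq'
    subst h1; subst h2; subst h3
    norm_num

private lemma keyRat (d : ℕ) (hmod : d % 4 = 3) (x y z : ℚ)
    (heq : (d : ℚ) * x ^ 2 = y ^ 2 + z ^ 2) : x = 0 ∧ y = 0 ∧ z = 0 := by
  set X : ℤ := x.num * y.den * z.den with hX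
  set Y : ℤ := y.num * x.den * z.den with hY
  set Z : ℤ := z.num * x.den * y.den with hZ
  have hxd : (x.den : ℚ) ≠ 0 := by exact_mod_cast x.den_ne_zero
  have hyd : (y.den : ℚ) ≠ 0 := by exact_mod_cast y.den_ne_zero
  have hzd : (z.den : ℚ) ≠ 0 := by exact_mod_cast z.den_ne_zero
  have hx : (x.num : ℚ) = x * x.den := by
    rw [← div_eq_iff hxd]; exact Rat.num_div_den x
  have hy : (y.num : ℚ) = y * y.den := by
    rw [← div_eq_iff hyd]; exact Rat.num_div_den y
  have hz : (z.num : ℚ) = z * z.den := by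
    rw [← div_eq_iff hzd]; exact Rat.num_div_den z
  have hint : (d : ℤ) * X ^ 2 = Y ^ 2 + Z ^ 2 := by
    have : ((d : ℤ) * X ^ 2 : ℚ) = ((Y ^ 2 + Z ^ 2 : ℤ) : ℚ) := by
      push_cast [hX, hY, hZ]
      rw [hx, hy, hz]
      linear_combination ((x.den : ℚ) ^ 2 * (y.den : ℚ) ^ 2 * (z.den : ℚ) ^ 2) * heq
    exact_mod_cast this
  obtain ⟨h1, h2, h3⟩ := keyInt d hmod X Y Z hint
  have hyd' : (y.den : ℤ) ≠ 0 := by exact_mod_cast y.den_ne_zero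
  have hzd' : (z.den : ℤ) ≠ 0 := by exact_mod_cast z.den_ne_zero
  have hxd' : (x.den : ℤ) ≠ 0 := by exact_mod_cast x.den_ne_zero
  refine ⟨?_, ?_, ?_⟩
  · have : x.num = 0 := by
      rcases mul_eq_zero.mp h1 with h | h
      · rcases mul_eq_zero.mp h with h' | h'
        · exact h'
        · exact absurd h' hyd'
      · exact absurd h hzd'
    exact Rat.num_eq_zero.mp this
  · have : y.num = 0 := by
      rcases mul_eq_zero.mp h2 with h | h
      · rcases mul_eq_zero.mp h with h' | h'
        · exact h'
        · exact absurd h' hxd'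
      · exact absurd h hzd'
    exact Rat.num_eq_zero.mp this
  · have : z.num = 0 := by
      rcases mul_eq_zero.mp h3 with h | h
      · rcases mul_eq_zero.mp h with h' | h'
        · exact h'
        · exact absurd h' hxd'
      · exact absurd h hyd'
    exact Rat.num_eq_zero.mp this

/-- for a positive integer `d ≡ 3 mod 4`, the quaternion algebra `(-1, d)`
over `ℚ` is a division algebra; equivalently, `dx² = y² + z²` has no nontrivial rational
solution. -/
theorem stmt_18 (d : ℕ) (hd : 0 < d) (hmod : d % 4 = 3) :
    (∀ x : ℍ[ℚ, -1, (d : ℚ)], x ≠ 0 → IsUnit x) ∧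
      ¬∃ x y z : ℚ, (x, y, z) ≠ (0, 0, 0) ∧ (d : ℚ) * x ^ 2 = y ^ 2 + z ^ 2 := by
  constructor
  · intro q hq
    set n : ℚ := q.re ^ 2 + q.imI ^ 2 - d * q.imJ ^ 2 - d * q.imK ^ 2 with hn
    have hne : n ≠ 0 := by
      intro h0
      by_cases hs : q.imJ ^ 2 + q.imK ^ 2 = 0
      · have hJ : q.imJ = 0 := by nlinarith [sq_nonneg q.imJ, sq_nonneg q.imK]
        have hK : q.imK = 0 := by nlinarith [sq_nonneg q.imJ, sq_nonneg q.imK]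
        have hre : q.re = 0 := by
          rw [hn, hJ, hK] at h0
          nlinarith [sq_nonneg q.re, sq_nonneg q.imI]
        have hI : q.imI = 0 := by
          rw [hn, hJ, hK] at h0
          nlinarith [sq_nonneg q.re, sq_nonneg q.imI]
        exact hq (QuaternionAlgebra.ext hre hI hJ hK)
      · set s : ℚ := q.imJ ^ 2 + q.imK ^ 2 with hs'
        have h0' : q.re ^ 2 + q.imI ^ 2 = (d : ℚ) * s := by
          rw [hs']; rw [hn] at h0; ring_nf; ring_nf at h0; linarith
        have key : (q.re * q.imJ + q.imI * q.imK) ^ 2 + (q.re * q.imK - q.imI * q.imJ) ^ 2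
            = (d : ℚ) * s ^ 2 := by
          rw [hs'] at h0' ⊢
          linear_combination (q.imJ ^ 2 + q.imK ^ 2) * h0'
        have heq : (d : ℚ) * 1 ^ 2 =
            ((q.re * q.imJ + q.imI * q.imK) / s) ^ 2 +
            ((q.re * q.imK - q.imI * q.imJ) / s) ^ 2 := by
          rw [div_pow, div_pow, ← add_div, key]
          field_simp
        obtain ⟨h1, _, _⟩ := keyRat d hmod 1 _ _ heq
        exact one_ne_zero h1
    have hmul : q * star q = ((n : ℚ) : ℍ[ℚ, -1, (d : ℚ)]) := by
      ext <;>
        simp only [QuaternionAlgebra.re_mul, QuaternionAlgebra.imI_mul,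
          QuaternionAlgebra.imJ_mul, QuaternionAlgebra.imK_mul, hn,
          QuaternionAlgebra.re_star, QuaternionAlgebra.imI_star,
          QuaternionAlgebra.imJ_star, QuaternionAlgebra.imK_star,
          QuaternionAlgebra.re_coe, QuaternionAlgebra.imI_coe,
          QuaternionAlgebra.imJ_coe, QuaternionAlgebra.imK_coe] <;> ring
    have hmul' : star q * q = ((n : ℚ) : ℍ[ℚ, -1, (d : ℚ)]) := by
      ext <;>
        simp only [QuaternionAlgebra.re_mul, QuaternionAlgebra.imI_mul,
          QuaternionAlgebra.imJ_mul, QuaternionAlgebra.imK_mul, hn,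
          QuaternionAlgebra.re_star, QuaternionAlgebra.imI_star,
          QuaternionAlgebra.imJ_star, QuaternionAlgebra.imK_star,
          QuaternionAlgebra.re_coe, QuaternionAlgebra.imI_coe,
          QuaternionAlgebra.imJ_coe, QuaternionAlgebra.imK_coe] <;> ring
    refine isUnit_iff_exists.mpr ⟨n⁻¹ • star q, ?_, ?_⟩
    · rw [mul_smul_comm, hmul, QuaternionAlgebra.smul_coe,
        inv_mul_cancel₀ hne, QuaternionAlgebra.coe_one]
    · rw [smul_mul_assoc, hmul', QuaternionAlgebra.smul_coe,
        inv_mul_cancel₀ hne, QuaternionAlgebra.coe_one]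
  · rintro ⟨x, y, z, hne, heq⟩
    obtain ⟨h1, h2, h3⟩ := keyRat d hmod x y z heq
    exact hne (by simp [h1, h2, h3])
end
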